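/- Let H = ℓ²(ℤ;ℂ) with standard orthonormal basis (δ_n)_{n∈ℤ}, and let S₁, S₂ ∈ B(H) be the bounded operators determined by S₁δ_n = δ_{2n} and S₂δ_n = δ_{2n+1} for n ∈ ℤ. Let U ∈ B(H) be unitary (U*U = UU* = I). Then the following are equivalent: (i) for every x ∈ B(H), U(S₁xS₁* + S₂xS₂*)U* = S₁(UxU*)S₁* + S₂(UxU*)S₂*; (ii) there exist λ, μ ∈ ℂ with |λ| = |μ| = 1 such that either Uδ_n = λδ_n for all n ≥ 0 and Uδ_n = μδ_n for all n ≤ −1, or Uδ_n = λδ_{−n−1} for all n ≥ 0 and Uδ_n = μδ_{−n−1} for all n ≤ −1. -/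

import Mathlib

/-!
Put `W_i = U S_i U*`. Condition (i) says that the Cuntz family `W` implements the same
endomorphism of `B(H)` as `S`; then every `S_l* W_k` commutes with all of `B(H)`, hence is a
scalar `c_lk`, and `U S_k = (∑_l c_lk S_l) U` with `c` an isometric `2 × 2` matrix. Since
`δ_0 = S₁δ_0` and `δ_{-1} = S₂δ_{-1}`, the vectors `Uδ_0`, `Uδ_{-1}` satisfy the dyadic recursion
`v(2n) = c₁ₖ v(n)`, `v(2n+1) = c₂ₖ v(n)`, and every integer is reached from `0` or `-1` by
`n ↦ 2n, 2n+1`; so `c` is the identity or the flip. Then `U` commutes with `S₁, S₂` or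
exchanges them, and the same recursion propagates `Uδ_0` and `Uδ_{-1}` to all of `Uδ_n`.
-/

open scoped ENNReal
open ContinuousLinearMap

noncomputable section

/-- `ℓ²(Λ; H)`: square-summable `H`-valued families indexed by `Λ`. -/
abbrev L2 (Λ : Type*) (H : Type*) [NormedAddCommGroup H] [InnerProductSpace ℂ H] :
    Type _ :=
  lp (fun _ : Λ => H) 2

variable {Λ H : Type*} [NormedAddCommGroup H] [InnerProductSpace ℂ H]

open Classical in
/-- `ξ ⊗ e_w`: the element of `ℓ²(Λ;H)` supported at `w` with value `ξ`. -/
def el (w : Λ) (ξ : H) : L2 Λ H := lp.single 2 w ξ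

open Classical in
/-- `ξ ↦ ξ ⊗ e_w` as a continuous linear map. -/
def elCLM (w : Λ) : H →L[ℂ] L2 Λ H :=
  LinearMap.mkContinuous
    { toFun := fun ξ => el w ξ
      map_add' := by
        intro ξ η
        apply lp.ext
        funext j
        by_cases h : j = w
        · subst h; simp [el, lp.single_apply_self]
        · simp [el, lp.single_apply_ne _ _ _ h]
      map_smul' := by
        intro c ξ
        simp [el, lp.single_smul] }
    1
    (by
      intro ξ
      simp only [LinearMap.coe_mk, AddHom.coe_mk, one_mul]
      exact le_of_eq (by simp only [el]; exact lp.norm_single (E := fun _ : Λ => H) (p := 2) (by norm_num) w ξ))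

/-- Evaluation at coordinate `w` as a continuous linear map. -/
def coordCLM (w : Λ) : L2 Λ H →L[ℂ] H :=
  LinearMap.mkContinuous
    { toFun := fun f => f w
      map_add' := by intro f g; simp
      map_smul' := by intro c f; simp }
    1
    (by
      intro f
      rw [one_mul]; exact lp.norm_apply_le_norm (p := 2) (by norm_num) f w)

/-- The `(μ,ν)` matrix entry of an operator on `ℓ²(Λ;H)`. -/
def entry (T : L2 Λ H →L[ℂ] L2 Λ H) (μ ν : Λ) : H →L[ℂ] H :=
  (coordCLM μ).comp (T.comp (elCLM ν))

/-- Membership in the closure of `S` for the weak operator topology. -/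
def InWOTClosure {E : Type*} [NormedAddCommGroup E] [InnerProductSpace ℂ E]
    (S : Set (E →L[ℂ] E)) (T : E →L[ℂ] E) : Prop :=
  ∀ ε > (0 : ℝ), ∀ (n : ℕ) (ξ η : Fin n → E),
    ∃ A ∈ S, ∀ i, ‖(inner ℂ ((T - A) (ξ i)) (η i) : ℂ)‖ < ε

/-- The closure of `S` in the weak operator topology. -/
def wotClosure {E : Type*} [NormedAddCommGroup E] [InnerProductSpace ℂ E]
    (S : Set (E →L[ℂ] E)) : Set (E →L[ℂ] E) :=
  { T | InWOTClosure S T }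

/-- A set of operators is WOT-closed. -/
def IsWOTClosed {E : Type*} [NormedAddCommGroup E] [InnerProductSpace ℂ E]
    (S : Set (E →L[ℂ] E)) : Prop :=
  wotClosure S ⊆ S

/-- A set `S` of operators is reflexive if any operator `T` such that `T h` lies in the
norm-closure of `S h` for every vector `h` belongs to `S`. -/
def IsReflexiveSet {E : Type*} [NormedAddCommGroup E] [InnerProductSpace ℂ E]
    (S : Set (E →L[ℂ] E)) : Prop :=
  ∀ T : E →L[ℂ] E, (∀ h : E, T h ∈ closure ((fun A : E →L[ℂ] E => A h) '' S)) → T ∈ S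

/-- The WOT-closed linear span of a set of operators. -/
def wotSpan {E : Type*} [NormedAddCommGroup E] [InnerProductSpace ℂ E]
    (S : Set (E →L[ℂ] E)) : Set (E →L[ℂ] E) :=
  wotClosure ((Submodule.span ℂ S : Submodule ℂ (E →L[ℂ] E)) : Set (E →L[ℂ] E))

/-- The reversed word. -/
def rev {ι : Type*} (μ : FreeMonoid ι) : FreeMonoid ι :=
  FreeMonoid.ofList (FreeMonoid.toList μ).reverse

/-- Length of a word. -/
def len {ι : Type*} (μ : FreeMonoid ι) : ℕ := (FreeMonoid.toList μ).length

/-- For `α : ι → (X → X)` and a word `μ = μ_m ⋯ μ_1`, the composition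
`α_μ = α_{μ_m} ∘ ⋯ ∘ α_{μ_1}`. -/
def wordMap {ι X : Type*} (α : ι → X → X) (μ : FreeMonoid ι) : X → X :=
  ((FreeMonoid.toList μ).map α).foldr (· ∘ ·) id

/-- For commuting maps `α_1,…,α_d` and `n ∈ ℕ^d`, the composition
`α^n = α_1^{n_1} ∘ ⋯ ∘ α_d^{n_d}`. -/
def multiIter {X : Type*} {d : ℕ} (α : Fin d → X → X) (n : Fin d → ℕ) : X → X :=
  (List.ofFn fun i => (α i)^[n i]).foldr (· ∘ ·) id

/-- The commutant of a set of operators. -/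
def commutantS {E : Type*} [NormedAddCommGroup E] [InnerProductSpace ℂ E]
    (S : Set (E →L[ℂ] E)) : Set (E →L[ℂ] E) :=
  { T | ∀ s ∈ S, T * s = s * T }


section CuntzFamily

variable {ι A : Type*} [Ring A] [StarRing A]

def IsCuntzToeplitzFamily [DecidableEq ι] (S : ι → A) : Prop :=
  ∀ i j, star (S i) * S j = if i = j then 1 else 0

def IsCuntzFamily [Fintype ι] [DecidableEq ι] (S : ι → A) : Prop :=
  IsCuntzToeplitzFamily S ∧ ∑ i, S i * star (S i) = 1

def cuntzEndo [Fintype ι] (S : ι → A) (x : A) : A :=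
  ∑ i, S i * x * star (S i)

theorem cuntzEndo_conj [Fintype ι] (U : A) (S : ι → A) (x : A) :
    cuntzEndo (fun i => U * S i * star U) x = U * cuntzEndo S (star U * x * U) * star U := by
  simp [cuntzEndo, Finset.mul_sum, Finset.sum_mul, mul_assoc]

theorem conj_cuntzEndo_of_mul_eq [Fintype ι] (σ : Equiv.Perm ι) {S : ι → A} {U : A}
    (hU : ∀ k, U * S k = S (σ k) * U) (x : A) :
    U * cuntzEndo S x * star U = cuntzEndo S (U * x * star U) := by
  have hU' : ∀ k, star (S k) * star U = star U * star (S (σ k)) := fun k => by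
    rw [← star_mul, hU, star_mul]
  simp only [cuntzEndo, Finset.mul_sum, Finset.sum_mul]
  rw [← Equiv.sum_comp σ (fun j => S j * (U * x * star U) * star (S j))]
  refine Finset.sum_congr rfl fun k _ => ?_
  calc U * (S k * x * star (S k)) * star U = U * S k * x * (star (S k) * star U) := by
        simp only [mul_assoc]
    _ = S (σ k) * (U * x * star U) * star (S (σ k)) := by
        rw [hU, hU']
        simp only [mul_assoc]

variable [DecidableEq ι] {S W : ι → A}

theorem IsCuntzToeplitzFamily.conj {U : A} (hU : star U * U = 1) (hU' : U * star U = 1)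
    (hS : IsCuntzToeplitzFamily S) : IsCuntzToeplitzFamily (fun i => U * S i * star U) := by
  intro i j
  simp only [star_mul, star_star, mul_assoc]
  simp only [← mul_assoc (star U) U, hU, one_mul]
  simp only [← mul_assoc, hS i j]
  split_ifs <;> simp [hU']

theorem IsCuntzToeplitzFamily.star_mul_cuntzEndo [Fintype ι] (hS : IsCuntzToeplitzFamily S)
    (l : ι) (x : A) : star (S l) * cuntzEndo S x = x * star (S l) := by
  simp [cuntzEndo, Finset.mul_sum, ← mul_assoc, hS l]

theorem IsCuntzToeplitzFamily.cuntzEndo_mul [Fintype ι] (hS : IsCuntzToeplitzFamily S)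
    (k : ι) (x : A) : cuntzEndo S x * S k = S k * x := by
  simp [cuntzEndo, Finset.sum_mul, mul_assoc, hS _ k]

theorem IsCuntzToeplitzFamily.commute_star_mul_of_cuntzEndo_eq [Fintype ι]
    (hS : IsCuntzToeplitzFamily S) (hW : IsCuntzToeplitzFamily W)
    (h : ∀ x, cuntzEndo W x = cuntzEndo S x) (l k : ι) (y : A) :
    Commute (star (S l) * W k) y :=
  calc star (S l) * W k * y = star (S l) * (cuntzEndo S y * W k) := by
        rw [← h, hW.cuntzEndo_mul, mul_assoc]
    _ = y * (star (S l) * W k) := by rw [← mul_assoc, hS.star_mul_cuntzEndo, mul_assoc]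

theorem IsCuntzFamily.sum_mul_star_mul [Fintype ι] (hS : IsCuntzFamily S) (x : A) :
    ∑ l, S l * (star (S l) * x) = x := by
  simp_rw [← mul_assoc, ← Finset.sum_mul, hS.2, one_mul]

end CuntzFamily

section CentralAlgebra

open scoped Matrix

variable {ι K A : Type*} [Fintype ι] [DecidableEq ι] [Field K] [StarRing K]
  [Ring A] [StarRing A] [Algebra K A] [StarModule K A] {S : ι → A}

theorem IsCuntzToeplitzFamily.star_sum_smul_mul_sum_smul (hS : IsCuntzToeplitzFamily S)
    (c d : ι → K) : star (∑ l, c l • S l) * ∑ l, d l • S l = (∑ l, star (c l) * d l) • 1 := by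
  simp [star_sum, Finset.sum_mul, Finset.mul_sum, hS _ _, Finset.sum_smul, smul_smul, mul_comm]

theorem exists_matrix_of_forall_conj_cuntzEndo [Algebra.IsCentral K A] [Nontrivial A] {U : A}
    (hU : star U * U = 1) (hU' : U * star U = 1) (hS : IsCuntzFamily S)
    (h : ∀ x, U * cuntzEndo S x * star U = cuntzEndo S (U * x * star U)) :
    ∃ c : Matrix ι ι K, cᴴ * c = 1 ∧ ∀ k, U * S k = (∑ l, c l k • S l) * U := by
  set W : ι → A := fun i => U * S i * star U with hW_def
  have hW : IsCuntzToeplitzFamily W := hS.1.conj hU hU'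
  have hWS : ∀ y, cuntzEndo W y = cuntzEndo S y := fun y => by
    rw [hW_def, cuntzEndo_conj, h]
    simp only [← mul_assoc, hU', one_mul, mul_assoc _ U, mul_one]
  have hcentral : ∀ l k, ∃ c : K, star (S l) * W k = algebraMap K A c := fun l k =>
    (Algebra.IsCentral.mem_center_iff K).mp <| Subalgebra.mem_center_iff.mpr fun y =>
      (hS.1.commute_star_mul_of_cuntzEndo_eq hW hWS l k y).eq.symm
  choose c hc using hcentral
  have hWc : ∀ k, W k = ∑ l, c l k • S l := fun k => by
    conv_lhs => rw [← hS.sum_mul_star_mul (W k)]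
    simp only [hc, Algebra.algebraMap_eq_smul_one, mul_smul_comm, mul_one]
  refine ⟨Matrix.of c, ?_, fun k => ?_⟩
  · ext i k
    have hik := hW i k
    rw [hWc, hWc, hS.1.star_sum_smul_mul_sum_smul, ← Algebra.algebraMap_eq_smul_one] at hik
    have hcik : ∑ l, star (c l i) * c l k = if i = k then 1 else 0 :=
      (algebraMap K A).injective (hik.trans (by split_ifs <;> simp))
    simpa [Matrix.mul_apply, Matrix.one_apply] using hcik
  · simp only [Matrix.of_apply, ← hWc, hW_def, mul_assoc, hU, mul_one]

end CentralAlgebra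

open scoped Matrix in
theorem Matrix.eq_one_or_eq_swap_of_conjTranspose_mul_self {𝕜 : Type*} [RCLike 𝕜]
    {c : Matrix (Fin 2) (Fin 2) 𝕜} (hc : cᴴ * c = 1) (h0 : c 0 0 = 1 ∨ c 1 0 = 1)
    (h1 : c 0 1 = 1 ∨ c 1 1 = 1) : c = 1 ∨ c = !![0, 1; 1, 0] := by
  have e00 : star (c 0 0) * c 0 0 + star (c 1 0) * c 1 0 = 1 := by
    simpa [Matrix.mul_apply, Fin.sum_univ_two] using congr_fun (congr_fun hc 0) 0
  have e01 : star (c 0 0) * c 0 1 + star (c 1 0) * c 1 1 = 0 := by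
    simpa [Matrix.mul_apply, Fin.sum_univ_two] using congr_fun (congr_fun hc 0) 1
  rcases h0 with h00 | h10
  · have h10 : c 1 0 = 0 := by
      rw [← CStarRing.star_mul_self_eq_zero_iff]
      simpa [h00] using e00
    have h01 : c 0 1 = 0 := by simpa [h00, h10] using e01
    have h11 : c 1 1 = 1 := h1.resolve_left (by simp [h01])
    left
    ext i j
    fin_cases i <;> fin_cases j <;> simp [h00, h10, h01, h11]
  · have h00 : c 0 0 = 0 := by
      rw [← CStarRing.star_mul_self_eq_zero_iff]
      simpa [h10] using e00
    have h11 : c 1 1 = 0 := by simpa [h00, h10] using e01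
    have h01 : c 0 1 = 1 := h1.resolve_right (by simp [h11])
    right
    ext i j
    fin_cases i <;> fin_cases j <;> simp [h00, h10, h01, h11]

section BasisVectors

theorem inner_el_one_left (n : Λ) (v : L2 Λ ℂ) : inner ℂ (el n (1 : ℂ)) v = v n := by
  classical
  simp [el, lp.inner_single_left]

theorem el_one_apply_self (n : Λ) : el n (1 : ℂ) n = 1 := by
  classical
  simp [el]

theorem el_one_apply_of_ne {n p : Λ} (h : p ≠ n) : el n (1 : ℂ) p = 0 := by
  classical
  simp [el, h]

theorem norm_el_one (n : Λ) : ‖el n (1 : ℂ)‖ = 1 := by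
  classical
  simp [el]

theorem el_one_ne_zero (n : Λ) : el n (1 : ℂ) ≠ 0 :=
  norm_ne_zero_iff.mp (by simp [norm_el_one])

theorem ext_el {F : Type*} [NormedAddCommGroup F] [NormedSpace ℂ F] {A B : L2 Λ ℂ →L[ℂ] F}
    (h : ∀ n, A (el n 1) = B (el n 1)) : A = B := by
  classical
  refine lp.ext_continuousLinearMap (by norm_num) fun n => ContinuousLinearMap.ext_ring ?_
  simpa [el] using h n

variable {S : L2 Λ ℂ →L[ℂ] L2 Λ ℂ} {f : Λ → Λ}

theorem adjoint_apply_of_map_el (hS : ∀ n, S (el n 1) = el (f n) 1) (x : L2 Λ ℂ) (n : Λ) :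
    adjoint S x n = x (f n) := by
  rw [← inner_el_one_left, adjoint_inner_right, hS, inner_el_one_left]

theorem apply_of_map_el (hS : ∀ n, S (el n 1) = el (f n) 1) (hf : f.Injective)
    (v : L2 Λ ℂ) (n : Λ) : S v (f n) = v n := by
  have hadj : adjoint S (el (f n) 1) = el n 1 := lp.ext <| funext fun m => by
    rw [adjoint_apply_of_map_el hS]
    rcases eq_or_ne m n with rfl | hmn
    · simp only [el_one_apply_self]
    · rw [el_one_apply_of_ne (hf.ne hmn), el_one_apply_of_ne hmn]
  rw [← inner_el_one_left, ← adjoint_inner_left, hadj, inner_el_one_left]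

theorem apply_eq_zero_of_map_el (hS : ∀ n, S (el n 1) = el (f n) 1) (v : L2 Λ ℂ) {p : Λ}
    (hp : ∀ n, f n ≠ p) : S v p = 0 := by
  have hadj : adjoint S (el p 1) = 0 := lp.ext <| funext fun m => by
    rw [adjoint_apply_of_map_el hS, el_one_apply_of_ne (hp m)]
    rfl
  rw [← inner_el_one_left, ← adjoint_inner_left, hadj, inner_zero_left]

end BasisVectors

theorem Int.binary_induction {P : ℤ → Prop} (zero : P 0) (neg_one : P (-1))
    (bit0 : ∀ n, P n → P (2 * n)) (bit1 : ∀ n, P n → P (2 * n + 1)) (n : ℤ) : P n := by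
  induction h : n.natAbs using Nat.strong_induction_on generalizing n with
  | _ k ih =>
    obtain ⟨m, rfl | rfl⟩ : ∃ m, n = 2 * m ∨ n = 2 * m + 1 := ⟨n / 2, by omega⟩
    · rcases eq_or_ne m 0 with rfl | hm
      · exact zero
      · exact bit0 m (ih _ (by omega) m rfl)
    · rcases eq_or_ne m (-1) with rfl | hm
      · exact neg_one
      · exact bit1 m (ih _ (by omega) m rfl)

section DyadicShifts

def IsDyadicShiftPair (S1 S2 : L2 ℤ ℂ →L[ℂ] L2 ℤ ℂ) : Prop :=
  (∀ n : ℤ, S1 (el n (1 : ℂ)) = el (2 * n) (1 : ℂ)) ∧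
    ∀ n : ℤ, S2 (el n (1 : ℂ)) = el (2 * n + 1) (1 : ℂ)

variable {S1 S2 : L2 ℤ ℂ →L[ℂ] L2 ℤ ℂ}

namespace IsDyadicShiftPair

variable (hS : IsDyadicShiftPair S1 S2)
include hS

theorem fst_apply_two_mul (v : L2 ℤ ℂ) (n : ℤ) : S1 v (2 * n) = v n :=
  apply_of_map_el hS.1 (fun m k h => by simpa using h) v n

theorem fst_apply_two_mul_add_one (v : L2 ℤ ℂ) (n : ℤ) : S1 v (2 * n + 1) = 0 :=
  apply_eq_zero_of_map_el hS.1 v fun m => by omega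

theorem snd_apply_two_mul (v : L2 ℤ ℂ) (n : ℤ) : S2 v (2 * n) = 0 :=
  apply_eq_zero_of_map_el hS.2 v fun m => by omega

theorem snd_apply_two_mul_add_one (v : L2 ℤ ℂ) (n : ℤ) : S2 v (2 * n + 1) = v n :=
  apply_of_map_el hS.2 (fun m k h => by simpa using h) v n

theorem fst_apply_el_zero : S1 (el 0 (1 : ℂ)) = el 0 1 := by
  simpa using hS.1 0

theorem snd_apply_el_neg_one : S2 (el (-1) (1 : ℂ)) = el (-1) 1 := by
  simpa using hS.2 (-1)

theorem fst_apply_el_neg_sub_one (n : ℤ) : S1 (el (-n - 1) (1 : ℂ)) = el (-(2 * n + 1) - 1) 1 := by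
  rw [hS.1]
  congr 1
  ring

theorem snd_apply_el_neg_sub_one (n : ℤ) : S2 (el (-n - 1) (1 : ℂ)) = el (-(2 * n) - 1) 1 := by
  rw [hS.2]
  congr 1
  ring

theorem isCuntzFamily : IsCuntzFamily ![S1, S2] := by
  refine ⟨fun i j => ?_, ?_⟩
  · fin_cases i <;> fin_cases j <;> ext v n <;>
      simp [star_eq_adjoint, adjoint_apply_of_map_el hS.1, adjoint_apply_of_map_el hS.2,
        hS.fst_apply_two_mul, hS.fst_apply_two_mul_add_one, hS.snd_apply_two_mul,
        hS.snd_apply_two_mul_add_one]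
  · ext v p
    obtain ⟨n, rfl | rfl⟩ : ∃ n, p = 2 * n ∨ p = 2 * n + 1 := ⟨p / 2, by omega⟩ <;>
      simp [star_eq_adjoint, adjoint_apply_of_map_el hS.1, adjoint_apply_of_map_el hS.2,
        hS.fst_apply_two_mul, hS.fst_apply_two_mul_add_one, hS.snd_apply_two_mul,
        hS.snd_apply_two_mul_add_one]

variable {a c : ℂ} {v : L2 ℤ ℂ}

theorem apply_two_mul_of_eq_smul_add_smul (hv : v = a • S1 v + c • S2 v) (n : ℤ) :
    v (2 * n) = a * v n ∧ v (2 * n + 1) = c * v n := by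
  constructor <;> conv_lhs => rw [hv]
  all_goals simp only [lp.coeFn_add, lp.coeFn_smul, Pi.add_apply, Pi.smul_apply, smul_eq_mul]
  · rw [hS.fst_apply_two_mul, hS.snd_apply_two_mul, mul_zero, add_zero]
  · rw [hS.fst_apply_two_mul_add_one, hS.snd_apply_two_mul_add_one, mul_zero, zero_add]

theorem eq_zero_of_eq_smul_add_smul (hv : v = a • S1 v + c • S2 v) (h0 : v 0 = 0)
    (h1 : v (-1) = 0) : v = 0 := by
  have hrec := hS.apply_two_mul_of_eq_smul_add_smul hv
  ext n
  exact Int.binary_induction (P := fun n => v n = 0) h0 h1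
    (fun n hn => by simp [(hrec n).1, hn]) (fun n hn => by simp [(hrec n).2, hn]) n

theorem eq_one_or_eq_one_of_eq_smul_add_smul (hv : v = a • S1 v + c • S2 v) (hv0 : v ≠ 0) :
    a = 1 ∨ c = 1 := by
  by_contra! hac
  have hrec := hS.apply_two_mul_of_eq_smul_add_smul hv
  refine hv0 (hS.eq_zero_of_eq_smul_add_smul hv ?_ ?_)
  · have h0 : v 0 = a * v 0 := by simpa using (hrec 0).1
    have h : (1 - a) * v 0 = 0 := by linear_combination h0
    exact (mul_eq_zero.mp h).resolve_left (sub_ne_zero.mpr hac.1.symm)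
  · have h1 : v (-1) = c * v (-1) := by simpa using (hrec (-1)).2
    have h : (1 - c) * v (-1) = 0 := by linear_combination h1
    exact (mul_eq_zero.mp h).resolve_left (sub_ne_zero.mpr hac.2.symm)

theorem eq_smul_el_zero_of_fst_apply (hv : S1 v = v) : v = v 0 • el 0 1 := by
  set w := v - v 0 • el 0 1 with hw
  have hwS : w = (1 : ℂ) • S1 w + (0 : ℂ) • S2 w := by simp [hw, hv, hS.fst_apply_el_zero]
  have hw0 : w 0 = 0 := by
    rw [hw, lp.coeFn_sub, lp.coeFn_smul, Pi.sub_apply, Pi.smul_apply, el_one_apply_self]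
    simp
  have hw1 : w (-1) = 0 := by simpa using (hS.apply_two_mul_of_eq_smul_add_smul hwS (-1)).2
  exact sub_eq_zero.mp (hS.eq_zero_of_eq_smul_add_smul hwS hw0 hw1)

theorem eq_smul_el_neg_one_of_snd_apply (hv : S2 v = v) : v = v (-1) • el (-1) 1 := by
  set w := v - v (-1) • el (-1) 1 with hw
  have hwS : w = (0 : ℂ) • S1 w + (1 : ℂ) • S2 w := by simp [hw, hv, hS.snd_apply_el_neg_one]
  have hw1 : w (-1) = 0 := by
    rw [hw, lp.coeFn_sub, lp.coeFn_smul, Pi.sub_apply, Pi.smul_apply, el_one_apply_self]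
    simp
  have hw0 : w 0 = 0 := by simpa using (hS.apply_two_mul_of_eq_smul_add_smul hwS 0).1
  exact sub_eq_zero.mp (hS.eq_zero_of_eq_smul_add_smul hwS hw0 hw1)

open scoped Matrix in
theorem intertwines_id_or_swap_of_mul_eq_sum_smul {U : L2 ℤ ℂ →L[ℂ] L2 ℤ ℂ}
    (hU : star U * U = 1) {c : Matrix (Fin 2) (Fin 2) ℂ} (hc : cᴴ * c = 1)
    (h : ∀ k, U * ![S1, S2] k = (∑ l, c l k • ![S1, S2] l) * U) :
    (U * S1 = S1 * U ∧ U * S2 = S2 * U) ∨ (U * S1 = S2 * U ∧ U * S2 = S1 * U) := by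
  have h1 : U * S1 = (c 0 0 • S1 + c 1 0 • S2) * U := by simpa [Fin.sum_univ_two] using h 0
  have h2 : U * S2 = (c 0 1 • S1 + c 1 1 • S2) * U := by simpa [Fin.sum_univ_two] using h 1
  have hU0 (n : ℤ) : U (el n 1) ≠ 0 := fun hn =>
    el_one_ne_zero n (by simpa [hn] using congr($hU (el n 1)).symm)
  have col0 : c 0 0 = 1 ∨ c 1 0 = 1 := by
    refine hS.eq_one_or_eq_one_of_eq_smul_add_smul ?_ (hU0 0)
    simpa [hS.fst_apply_el_zero] using congr($h1 (el 0 1))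
  have col1 : c 0 1 = 1 ∨ c 1 1 = 1 := by
    refine hS.eq_one_or_eq_one_of_eq_smul_add_smul ?_ (hU0 (-1))
    simpa [hS.snd_apply_el_neg_one] using congr($h2 (el (-1) 1))
  rcases Matrix.eq_one_or_eq_swap_of_conjTranspose_mul_self hc col0 col1 with rfl | rfl
  · exact .inl (by simpa using And.intro h1 h2)
  · exact .inr (by simpa using And.intro h1 h2)

end IsDyadicShiftPair

end DyadicShifts

section SignwiseBasisMaps

def MapsBasisSignwise (V : L2 ℤ ℂ →L[ℂ] L2 ℤ ℂ) (τ : ℤ → ℤ) (lam mu : ℂ) : Prop :=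
  (∀ n : ℤ, 0 ≤ n → V (el n (1 : ℂ)) = lam • el (τ n) (1 : ℂ)) ∧
    (∀ n : ℤ, n ≤ -1 → V (el n (1 : ℂ)) = mu • el (τ n) (1 : ℂ))

variable {S1 S2 V : L2 ℤ ℂ →L[ℂ] L2 ℤ ℂ} {τ : ℤ → ℤ} {lam mu : ℂ}

theorem IsDyadicShiftPair.mapsBasisSignwise_of_mul_eq (hS : IsDyadicShiftPair S1 S2)
    {T1 T2 : L2 ℤ ℂ →L[ℂ] L2 ℤ ℂ} (hT1 : ∀ n, T1 (el (τ n) (1 : ℂ)) = el (τ (2 * n)) (1 : ℂ))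
    (hT2 : ∀ n, T2 (el (τ n) (1 : ℂ)) = el (τ (2 * n + 1)) (1 : ℂ))
    (h1 : V * S1 = T1 * V) (h2 : V * S2 = T2 * V)
    (h0 : V (el 0 1) = lam • el (τ 0) 1) (hm1 : V (el (-1) 1) = mu • el (τ (-1)) 1) :
    MapsBasisSignwise V τ lam mu := by
  set coef : ℤ → ℂ := fun n => if 0 ≤ n then lam else mu with hcoef
  suffices h : ∀ n, V (el n 1) = coef n • el (τ n) 1 from
    ⟨fun n hn => by simpa [coef, hn] using h n,
      fun n hn => by simpa [coef, show ¬ 0 ≤ n by omega] using h n⟩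
  have hcoef0 (n : ℤ) : coef (2 * n) = coef n := by
    simp only [hcoef]
    split_ifs <;> first | rfl | omega
  have hcoef1 (n : ℤ) : coef (2 * n + 1) = coef n := by
    simp only [hcoef]
    split_ifs <;> first | rfl | omega
  refine Int.binary_induction (by simpa [coef] using h0) (by simpa [coef] using hm1)
    (fun n hn => ?_) (fun n hn => ?_)
  · calc V (el (2 * n) 1) = (V * S1) (el n 1) := by rw [mul_apply_eq_comp, hS.1]
      _ = coef (2 * n) • el (τ (2 * n)) 1 := by
        rw [h1, mul_apply_eq_comp, hn, map_smul, hT1, hcoef0]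
  · calc V (el (2 * n + 1) 1) = (V * S2) (el n 1) := by rw [mul_apply_eq_comp, hS.2]
      _ = coef (2 * n + 1) • el (τ (2 * n + 1)) 1 := by
        rw [h2, mul_apply_eq_comp, hn, map_smul, hT2, hcoef1]

theorem MapsBasisSignwise.mul_eq_mul (hV : MapsBasisSignwise V τ lam mu) {S T : L2 ℤ ℂ →L[ℂ] L2 ℤ ℂ}
    {f : ℤ → ℤ} (hf : ∀ n, 0 ≤ f n ↔ 0 ≤ n) (hS : ∀ n, S (el n (1 : ℂ)) = el (f n) (1 : ℂ))
    (hT : ∀ n, T (el (τ n) (1 : ℂ)) = el (τ (f n)) (1 : ℂ)) : V * S = T * V :=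
  ext_el fun n => by
    have hfn := hf n
    simp only [mul_apply_eq_comp, hS]
    rcases le_or_gt 0 n with hn | hn
    · rw [hV.1 _ (by omega), hV.1 n hn, map_smul, hT]
    · rw [hV.2 _ (by omega), hV.2 n (by omega), map_smul, hT]

theorem MapsBasisSignwise.norm_eq_one (hV : MapsBasisSignwise V τ lam mu)
    (hU : V ∈ unitary (L2 ℤ ℂ →L[ℂ] L2 ℤ ℂ)) : ‖lam‖ = 1 ∧ ‖mu‖ = 1 := by
  have key (n : ℤ) (c : ℂ) (h : V (el n (1 : ℂ)) = c • el (τ n) (1 : ℂ)) : ‖c‖ = 1 := by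
    simpa [h, norm_smul, norm_el_one] using norm_map_of_mem_unitary hU (el n (1 : ℂ))
  exact ⟨key 0 lam (hV.1 0 le_rfl), key (-1) mu (hV.2 (-1) le_rfl)⟩

theorem IsDyadicShiftPair.exists_mapsBasisSignwise_id (hS : IsDyadicShiftPair S1 S2)
    (h1 : V * S1 = S1 * V) (h2 : V * S2 = S2 * V) : ∃ lam mu, MapsBasisSignwise V id lam mu := by
  have hfix0 : S1 (V (el 0 1)) = V (el 0 1) := by
    rw [← mul_apply_eq_comp, ← h1, mul_apply_eq_comp, hS.fst_apply_el_zero]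
  have hfix1 : S2 (V (el (-1) 1)) = V (el (-1) 1) := by
    rw [← mul_apply_eq_comp, ← h2, mul_apply_eq_comp, hS.snd_apply_el_neg_one]
  exact ⟨_, _, hS.mapsBasisSignwise_of_mul_eq hS.1 hS.2 h1 h2
    (hS.eq_smul_el_zero_of_fst_apply hfix0) (hS.eq_smul_el_neg_one_of_snd_apply hfix1)⟩

theorem IsDyadicShiftPair.exists_mapsBasisSignwise_neg_sub_one (hS : IsDyadicShiftPair S1 S2)
    (h1 : V * S1 = S2 * V) (h2 : V * S2 = S1 * V) :
    ∃ lam mu, MapsBasisSignwise V (fun n => -n - 1) lam mu := by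
  have hfix0 : S2 (V (el 0 1)) = V (el 0 1) := by
    rw [← mul_apply_eq_comp, ← h1, mul_apply_eq_comp, hS.fst_apply_el_zero]
  have hfix1 : S1 (V (el (-1) 1)) = V (el (-1) 1) := by
    rw [← mul_apply_eq_comp, ← h2, mul_apply_eq_comp, hS.snd_apply_el_neg_one]
  exact ⟨_, _, hS.mapsBasisSignwise_of_mul_eq hS.snd_apply_el_neg_sub_one
    hS.fst_apply_el_neg_sub_one h1 h2
    (hS.eq_smul_el_neg_one_of_snd_apply hfix0) (hS.eq_smul_el_zero_of_fst_apply hfix1)⟩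

theorem IsDyadicShiftPair.mul_eq_mul_of_mapsBasisSignwise_id (hS : IsDyadicShiftPair S1 S2)
    (hV : MapsBasisSignwise V id lam mu) : V * S1 = S1 * V ∧ V * S2 = S2 * V :=
  ⟨hV.mul_eq_mul (fun n => by omega) hS.1 hS.1, hV.mul_eq_mul (fun n => by omega) hS.2 hS.2⟩

theorem IsDyadicShiftPair.mul_eq_mul_of_mapsBasisSignwise_neg_sub_one
    (hS : IsDyadicShiftPair S1 S2) (hV : MapsBasisSignwise V (fun n => -n - 1) lam mu) :
    V * S1 = S2 * V ∧ V * S2 = S1 * V :=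
  ⟨hV.mul_eq_mul (fun n => by omega) hS.1 hS.snd_apply_el_neg_sub_one,
    hV.mul_eq_mul (fun n => by omega) hS.2 hS.fst_apply_el_neg_sub_one⟩

end SignwiseBasisMaps

/-- characterization of the unitaries on `ℓ²(ℤ)` commuting with the
endomorphism induced by the Cuntz family `S₁δ_n = δ_{2n}`, `S₂δ_n = δ_{2n+1}`. -/
theorem statement19
    (S1 S2 U : L2 ℤ ℂ →L[ℂ] L2 ℤ ℂ)
    (hS1 : ∀ n : ℤ, S1 (el n (1 : ℂ)) = el (2 * n) (1 : ℂ))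
    (hS2 : ∀ n : ℤ, S2 (el n (1 : ℂ)) = el (2 * n + 1) (1 : ℂ))
    (hU1 : ContinuousLinearMap.adjoint U * U = 1)
    (hU2 : U * ContinuousLinearMap.adjoint U = 1) :
    (∀ x : L2 ℤ ℂ →L[ℂ] L2 ℤ ℂ,
        U * (S1 * x * ContinuousLinearMap.adjoint S1 +
              S2 * x * ContinuousLinearMap.adjoint S2) * ContinuousLinearMap.adjoint U =
          S1 * (U * x * ContinuousLinearMap.adjoint U) * ContinuousLinearMap.adjoint S1 +
            S2 * (U * x * ContinuousLinearMap.adjoint U) * ContinuousLinearMap.adjoint S2) ↔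
      ∃ lam mu : ℂ, ‖lam‖ = 1 ∧ ‖mu‖ = 1 ∧
        (((∀ n : ℤ, 0 ≤ n → U (el n (1 : ℂ)) = lam • el n (1 : ℂ)) ∧
            (∀ n : ℤ, n ≤ -1 → U (el n (1 : ℂ)) = mu • el n (1 : ℂ))) ∨
          ((∀ n : ℤ, 0 ≤ n → U (el n (1 : ℂ)) = lam • el (-n - 1) (1 : ℂ)) ∧
            (∀ n : ℤ, n ≤ -1 → U (el n (1 : ℂ)) = mu • el (-n - 1) (1 : ℂ)))) := by
  have hS : IsDyadicShiftPair S1 S2 := ⟨hS1, hS2⟩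
  have hU : U ∈ unitary (L2 ℤ ℂ →L[ℂ] L2 ℤ ℂ) := ⟨hU1, hU2⟩
  have : Nontrivial (L2 ℤ ℂ) := ⟨el 0 1, 0, el_one_ne_zero 0⟩
  have hρ (x : L2 ℤ ℂ →L[ℂ] L2 ℤ ℂ) :
      cuntzEndo ![S1, S2] x = S1 * x * adjoint S1 + S2 * x * adjoint S2 := by
    simp [cuntzEndo, Fin.sum_univ_two, star_eq_adjoint]
  simp only [← hρ]
  constructor
  · intro h
    obtain ⟨c, hc, hUS⟩ :=
      exists_matrix_of_forall_conj_cuntzEndo (K := ℂ) hU1 hU2 hS.isCuntzFamily h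
    rcases hS.intertwines_id_or_swap_of_mul_eq_sum_smul hU1 hc hUS with ⟨h1, h2⟩ | ⟨h1, h2⟩
    · obtain ⟨lam, mu, hV⟩ := hS.exists_mapsBasisSignwise_id h1 h2
      exact ⟨lam, mu, (hV.norm_eq_one hU).1, (hV.norm_eq_one hU).2, .inl hV⟩
    · obtain ⟨lam, mu, hV⟩ := hS.exists_mapsBasisSignwise_neg_sub_one h1 h2
      exact ⟨lam, mu, (hV.norm_eq_one hU).1, (hV.norm_eq_one hU).2, .inr hV⟩
  · rintro ⟨lam, mu, -, -, hV | hV⟩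
    · obtain ⟨h1, h2⟩ := hS.mul_eq_mul_of_mapsBasisSignwise_id hV
      exact conj_cuntzEndo_of_mul_eq (Equiv.refl _) (Fin.forall_fin_two.mpr ⟨h1, h2⟩)
    · obtain ⟨h1, h2⟩ := hS.mul_eq_mul_of_mapsBasisSignwise_neg_sub_one hV
      exact conj_cuntzEndo_of_mul_eq (Equiv.swap 0 1) (Fin.forall_fin_two.mpr ⟨h1, h2⟩)
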